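/- arXiv:1004.3395 — 2 statements merged into one kernel-verified Lean document; each statement's English description precedes it below -/
import Mathlib

section
/- Consider a multiset of n natural numbers (ids), all initially 0, evolving by steps: a step selects two elements with equal value v and replaces one of them by v + 1, subject to the constraint that v + 1 ≤ n - 1. Then every value that has ever appeared in the multiset remains present in the multiset at all later times. -/
/-- One step of the bounded id-assignment process: two elements share value `v`
with `v + 1 ≤ n - 1`, and one of them is replaced by `v + 1`. -/
def IdStep (n : ℕ) (M M' : Multiset ℕ) : Prop :=
  ∃ v, v + 1 ≤ n - 1 ∧ 2 ≤ M.count v ∧ M' = (v + 1) ::ₘ M.erase v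

theorem Multiset.subset_erase_of_two_le_count {α : Type*} [DecidableEq α] {a : α}
    {s : Multiset α} (h : 2 ≤ s.count a) : s ⊆ s.erase a := by
  intro b hb
  by_cases hba : b = a
  · subst hba
    rw [← Multiset.count_pos, Multiset.count_erase_self]
    omega
  · rwa [Multiset.mem_erase_of_ne hba]

theorem IdStep.subset {n : ℕ} {M M' : Multiset ℕ} (h : IdStep n M M') : M ⊆ M' := by
  obtain ⟨v, -, hv, rfl⟩ := h
  exact Multiset.Subset.trans (Multiset.subset_erase_of_two_le_count hv)
    (Multiset.subset_cons _ _)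

theorem id_values_persist_general (n : ℕ) (M M' : Multiset ℕ)
    (h : Relation.ReflTransGen (IdStep n) M M') :
    ∀ v ∈ M, v ∈ M' := by
  induction h with
  | refl => exact Multiset.Subset.refl M
  | tail _ hstep hsub => exact Multiset.Subset.trans hsub hstep.subset

theorem id_values_persist (n : ℕ) (M M' : Multiset ℕ)
    (h0 : Relation.ReflTransGen (IdStep n) (Multiset.replicate n 0) M)
    (h : Relation.ReflTransGen (IdStep n) M M') :
    ∀ v ∈ M, v ∈ M' :=
  id_values_persist_general n M M' h
end

section
/- Consider a multiset of n natural numbers, all initially 0, evolving by steps in which two equal elements v < n - 1 are selected and one is replaced by v + 1. If the multiset contains the value n - 1, then the multiset equals {0, 1, ..., n - 1}, i.e., each value in {0,...,n-1} appears exactly once. -/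
lemma Multiset.mem_cons_erase_iff_of_two_le_count {α : Type*} [DecidableEq α] {M : Multiset α}
    {v w x : α} (hv : 2 ≤ M.count v) : x ∈ w ::ₘ M.erase v ↔ x = w ∨ x ∈ M := by
  rw [Multiset.mem_cons]
  refine or_congr_right ⟨Multiset.mem_of_mem_erase, fun hx => ?_⟩
  rcases eq_or_ne x v with rfl | hxv
  · rw [← Multiset.count_pos, Multiset.count_erase_self]
    omega
  · exact (Multiset.mem_erase_of_ne hxv).mpr hx

lemma isLowerSet_insert_succ {s : Set ℕ} (hs : IsLowerSet s) {v : ℕ} (hv : v ∈ s) :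
    IsLowerSet (insert (v + 1) s) := by
  intro a b hba ha
  rcases ha with rfl | ha
  · rcases Nat.lt_or_eq_of_le hba with hlt | rfl
    · exact Or.inr (hs (Nat.lt_succ_iff.mp hlt) hv)
    · exact Or.inl rfl
  · exact Or.inr (hs hba ha)

namespace IdStep

variable {n : ℕ} {M M' : Multiset ℕ}

lemma card_eq (h : IdStep n M M') : M'.card = M.card := by
  obtain ⟨v, -, hv, rfl⟩ := h
  rw [Multiset.card_cons, Multiset.card_erase_add_one (Multiset.count_pos.mp (by omega))]

lemma isLowerSet (h : IdStep n M M') (hM : IsLowerSet {x | x ∈ M}) :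
    IsLowerSet {x | x ∈ M'} := by
  obtain ⟨v, -, hv, rfl⟩ := h
  have hsupp : {x | x ∈ (v + 1) ::ₘ M.erase v} = insert (v + 1) {x | x ∈ M} :=
    Set.ext fun x => Multiset.mem_cons_erase_iff_of_two_le_count hv
  rw [hsupp]
  exact isLowerSet_insert_succ hM (Multiset.count_pos.mp (by omega))

lemma reachable_card_and_isLowerSet
    (h : Relation.ReflTransGen (IdStep n) (Multiset.replicate n 0) M) :
    M.card = n ∧ IsLowerSet {x | x ∈ M} := by
  induction h with
  | refl =>
    refine ⟨Multiset.card_replicate n 0, fun a b hba ha => ?_⟩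
    obtain rfl : b = a := by have := Multiset.eq_of_mem_replicate ha; omega
    exact ha
  | tail _ step ih => exact ⟨step.card_eq.trans ih.1, step.isLowerSet ih.2⟩

end IdStep

lemma Multiset.eq_range_of_card_eq_of_forall_lt_mem {M : Multiset ℕ} {n : ℕ} (hcard : M.card = n)
    (hmem : ∀ u < n, u ∈ M) : M = Multiset.range n := by
  have hle : Multiset.range n ≤ M :=
    (Multiset.le_iff_subset (Multiset.nodup_range n)).mpr fun u hu =>
      hmem u (Multiset.mem_range.mp hu)
  exact (Multiset.eq_of_le_of_card_le hle (by rw [hcard, Multiset.card_range])).symm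

theorem max_id_implies_all_ids_general (n : ℕ) (M : Multiset ℕ)
    (h : Relation.ReflTransGen (IdStep n) (Multiset.replicate n 0) M)
    (hmax : n - 1 ∈ M) :
    M = Multiset.range n := by
  obtain ⟨hcard, hlower⟩ := IdStep.reachable_card_and_isLowerSet h
  exact Multiset.eq_range_of_card_eq_of_forall_lt_mem hcard fun u hu =>
    hlower (Nat.le_sub_one_of_lt hu) hmax

theorem max_id_implies_all_ids (n : ℕ) (hn : 1 ≤ n) (M : Multiset ℕ)
    (h : Relation.ReflTransGen (IdStep n) (Multiset.replicate n 0) M)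
    (hmax : n - 1 ∈ M) :
    M = Multiset.range n :=
  max_id_implies_all_ids_general n M h hmax
end
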